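/- arXiv:2204.13550 — 6 statements merged into one kernel-verified Lean document; each statement's English description precedes it below -/
import Mathlib

section
/- Let n ≥ 2 and 0 < δ < 1. There exist constants c = c(n,δ) > 0 and C = C(n,δ) > 0 such that for every nonzero symmetric matrix A ∈ ℝ^{n×n} satisfying the Cordes condition (n−1+δ)·|A|² ≤ (tr A)², and for every symmetric matrix M ∈ ℝ^{n×n}, one has c·|M|² ≤ |M|² − (tr M)² + (C/|A|²)·⟨A,M⟩². -/
/-!
Write `u` for the identity matrix, so that `‖u‖² = n` and `⟪u, x⟫ = tr x` for the Hilbert–Schmidt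
inner product. The Cordes condition says exactly that the component `g = u - t a`
(`t = ⟪u, a⟫ / ‖a‖²`) of `u` orthogonal to `a` has `‖g‖² ≤ 1 - δ`. Splitting
`⟪u, x⟫ = t ⟪a, x⟫ + ⟪g, x⟫` and applying Young's inequality with weights `1 - δ/2` and `δ/2` gives
`⟪u, x⟫² ≤ (1 - δ/2) ‖x‖² + (2/δ) t² ⟪a, x⟫²`, and `t² ≤ ‖u‖² / ‖a‖²` by Cauchy–Schwarz.
Hence one may take `c = δ/2` and `C = 2n/δ`.
-/

open scoped RealInnerProductSpace

lemma add_sq_le_of_sq_le_one_sub_mul {δ s p q : ℝ} (hδ : 0 < δ) (hδ1 : δ ≤ 1) (hs : 0 ≤ s)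
    (hq : q ^ 2 ≤ (1 - δ) * s) : (p + q) ^ 2 ≤ (1 - δ / 2) * s + 2 / δ * p ^ 2 := by
  have h2δ : 0 < 2 - δ := by linarith
  -- Young's inequality with weights `1 - δ/2` and `δ/2`, plus `(1 - δ) ≤ (1 - δ/2)²`
  have key : (1 - δ / 2) * s + 2 / δ * p ^ 2 - (p + q) ^ 2
      = ((2 - δ) ^ 2 * s - 4 * q ^ 2) / (2 * (2 - δ))
        + (δ * q - (2 - δ) * p) ^ 2 / ((2 - δ) * δ) := by
    field_simp
    ring
  have hnum : 0 ≤ (2 - δ) ^ 2 * s - 4 * q ^ 2 := by nlinarith [mul_nonneg (sq_nonneg δ) hs]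
  rw [← sub_nonneg, key]
  positivity

theorem cordes_inequality {E : Type*} [NormedAddCommGroup E] [InnerProductSpace ℝ E]
    {u a : E} {δ : ℝ} (hδ : 0 < δ) (ha : a ≠ 0)
    (hcordes : (‖u‖ ^ 2 - 1 + δ) * ‖a‖ ^ 2 ≤ ⟪u, a⟫ ^ 2) (x : E) :
    δ / 2 * ‖x‖ ^ 2 ≤ ‖x‖ ^ 2 - ⟪u, x⟫ ^ 2 + 2 * ‖u‖ ^ 2 / δ / ‖a‖ ^ 2 * ⟪a, x⟫ ^ 2 := by
  have ha2 : 0 < ‖a‖ ^ 2 := by positivity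
  set t := ⟪u, a⟫ / ‖a‖ ^ 2 with ht
  set g := u - t • a with hg
  have hg_norm : ‖g‖ ^ 2 = ‖u‖ ^ 2 - ⟪u, a⟫ ^ 2 / ‖a‖ ^ 2 := by
    rw [hg, norm_sub_sq_real, real_inner_smul_right, norm_smul, mul_pow, Real.norm_eq_abs,
      sq_abs, ht]
    field_simp
    ring
  have hg_le : ‖g‖ ^ 2 ≤ 1 - δ := by
    rw [hg_norm, sub_le_iff_le_add, ← sub_le_iff_le_add', le_div_iff₀ ha2]
    linarith
  have hδ1 : δ ≤ 1 := by nlinarith [sq_nonneg ‖g‖]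
  have hsplit : ⟪u, x⟫ = t * ⟪a, x⟫ + ⟪g, x⟫ := by
    rw [hg, inner_sub_left, real_inner_smul_left]
    ring
  have hgx : ⟪g, x⟫ ^ 2 ≤ (1 - δ) * ‖x‖ ^ 2 :=
    calc ⟪g, x⟫ ^ 2 ≤ (‖g‖ * ‖x‖) ^ 2 := by
          rw [← sq_abs]
          gcongr
          exact abs_real_inner_le_norm g x
      _ ≤ (1 - δ) * ‖x‖ ^ 2 := by
          rw [mul_pow]
          gcongr
  have ht2 : t ^ 2 ≤ ‖u‖ ^ 2 / ‖a‖ ^ 2 := by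
    rw [ht, div_pow, div_le_div_iff₀ (by positivity) ha2, ← sq_abs, ← pow_mul]
    calc |⟪u, a⟫| ^ 2 * ‖a‖ ^ 2 ≤ (‖u‖ * ‖a‖) ^ 2 * ‖a‖ ^ 2 := by
          gcongr
          exact abs_real_inner_le_norm u a
      _ = ‖u‖ ^ 2 * ‖a‖ ^ (2 * 2) := by ring
  have hux : ⟪u, x⟫ ^ 2 ≤ (1 - δ / 2) * ‖x‖ ^ 2 + 2 / δ * (t * ⟪a, x⟫) ^ 2 := by
    rw [hsplit]
    exact add_sq_le_of_sq_le_one_sub_mul hδ hδ1 (by positivity) hgx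
  have hax : 2 / δ * (t * ⟪a, x⟫) ^ 2 ≤ 2 * ‖u‖ ^ 2 / δ / ‖a‖ ^ 2 * ⟪a, x⟫ ^ 2 :=
    calc 2 / δ * (t * ⟪a, x⟫) ^ 2 = 2 / δ * t ^ 2 * ⟪a, x⟫ ^ 2 := by ring
      _ ≤ 2 / δ * (‖u‖ ^ 2 / ‖a‖ ^ 2) * ⟪a, x⟫ ^ 2 := by gcongr
      _ = 2 * ‖u‖ ^ 2 / δ / ‖a‖ ^ 2 * ⟪a, x⟫ ^ 2 := by ring
  linarith

namespace Matrix

variable {m n : Type*}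

def toFrobenius (A : Matrix m n ℝ) : EuclideanSpace ℝ (m × n) :=
  WithLp.toLp 2 fun ij => A ij.1 ij.2

theorem toFrobenius_ne_zero {A : Matrix m n ℝ} (hA : A ≠ 0) : A.toFrobenius ≠ 0 := by
  contrapose! hA
  ext i j
  simpa [toFrobenius] using congr($hA (i, j))

variable [Fintype m] [Fintype n]

theorem inner_toFrobenius (A B : Matrix m n ℝ) :
    ⟪A.toFrobenius, B.toFrobenius⟫ = ∑ i, ∑ j, A i j * B i j := by
  simp [toFrobenius, PiLp.inner_apply, Fintype.sum_prod_type, mul_comm]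

theorem norm_toFrobenius_sq (A : Matrix m n ℝ) :
    ‖A.toFrobenius‖ ^ 2 = ∑ i, ∑ j, A i j ^ 2 := by
  simp [toFrobenius, EuclideanSpace.real_norm_sq_eq, Fintype.sum_prod_type]

theorem inner_one_toFrobenius [DecidableEq n] (M : Matrix n n ℝ) :
    ⟪(1 : Matrix n n ℝ).toFrobenius, M.toFrobenius⟫ = M.trace := by
  simp [inner_toFrobenius, one_apply, trace]

theorem norm_one_toFrobenius_sq [DecidableEq n] :
    ‖(1 : Matrix n n ℝ).toFrobenius‖ ^ 2 = Fintype.card n := by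
  simp [norm_toFrobenius_sq, one_apply]

end Matrix

theorem stmt_0_general (n : ℕ) (hn : 2 ≤ n) (δ : ℝ) (hδ0 : 0 < δ) :
    ∃ c C : ℝ, 0 < c ∧ 0 < C ∧
      ∀ A M : Matrix (Fin n) (Fin n) ℝ, A.IsSymm → A ≠ 0 →
        ((n : ℝ) - 1 + δ) * (∑ i, ∑ j, A i j ^ 2) ≤ (Matrix.trace A) ^ 2 →
        M.IsSymm →
        c * (∑ i, ∑ j, M i j ^ 2) ≤
          (∑ i, ∑ j, M i j ^ 2) - (Matrix.trace M) ^ 2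
            + (C / (∑ i, ∑ j, A i j ^ 2)) * (∑ i, ∑ j, A i j * M i j) ^ 2 := by
  have hn0 : (0 : ℝ) < n := by exact_mod_cast (by omega : 0 < n)
  refine ⟨δ / 2, 2 * n / δ, by positivity, by positivity, fun A M _ hA hcordes _ => ?_⟩
  have key := cordes_inequality (u := (1 : Matrix (Fin n) (Fin n) ℝ).toFrobenius) hδ0
    (Matrix.toFrobenius_ne_zero hA) (x := M.toFrobenius)
  rw [Matrix.norm_one_toFrobenius_sq, Matrix.inner_one_toFrobenius,
    Matrix.inner_one_toFrobenius, Matrix.inner_toFrobenius, Matrix.norm_toFrobenius_sq,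
    Matrix.norm_toFrobenius_sq, Fintype.card_fin] at key
  exact key hcordes

/-- Cordes' basic matrix inequality. -/
theorem stmt_0 (n : ℕ) (hn : 2 ≤ n) (δ : ℝ) (hδ0 : 0 < δ) (hδ1 : δ < 1) :
    ∃ c C : ℝ, 0 < c ∧ 0 < C ∧
      ∀ A M : Matrix (Fin n) (Fin n) ℝ, A.IsSymm → A ≠ 0 →
        ((n : ℝ) - 1 + δ) * (∑ i, ∑ j, A i j ^ 2) ≤ (Matrix.trace A) ^ 2 →
        M.IsSymm →
        c * (∑ i, ∑ j, M i j ^ 2) ≤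
          (∑ i, ∑ j, M i j ^ 2) - (Matrix.trace M) ^ 2
            + (C / (∑ i, ∑ j, A i j ^ 2)) * (∑ i, ∑ j, A i j * M i j) ^ 2 :=
  stmt_0_general n hn δ hδ0
end

section
/- Let n ≥ 2 and 0 < δ < 1. There exist constants c = c(n,δ) > 0 and C = C(n,δ) > 0 such that the following holds: for every symmetric positive definite matrix B ∈ ℝ^{n×n} and every nonzero symmetric matrix A ∈ ℝ^{n×n} satisfying (n−1+δ)·⟨B⁻¹A,(B⁻¹A)ᵀ⟩ ≤ (tr(B⁻¹A))², and for every symmetric matrix M ∈ ℝ^{n×n}, one has c·⟨BM,(BM)ᵀ⟩ ≤ ⟨BM,(BM)ᵀ⟩ − (tr(BM))² + (C/⟨B⁻¹A,(B⁻¹A)ᵀ⟩)·⟨A,M⟩². -/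
/-!
Write `B = Qᵀ Q`. Then `B⁻¹ A` and `B M` are similar to the symmetric matrices
`Â = Q⁻ᵀ A Q⁻¹` and `Ŷ = Q M Qᵀ`, and `⟨A, M⟩ = tr (Â Ŷ)`, which reduces everything to `B = 1`.
In the Frobenius inner product, `tr Ŷ = ⟨1, Ŷ⟩` with `|1|² = n`, and the hypothesis says that the
component of `1` orthogonal to `Â` has squared norm at most `1 - δ`. Splitting `⟨1, Ŷ⟩` along `Â`
and its orthogonal complement, Cauchy–Schwarz on the complement and Young's inequality give
`(tr Ŷ)² ≤ (1 - δ / 2) |Ŷ|² + (n (2 - δ) / δ) ⟨Â, Ŷ⟩² / |Â|²`.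
-/

open Matrix
open scoped RealInnerProductSpace

section InnerProductSpace

variable {E : Type*} [NormedAddCommGroup E] [InnerProductSpace ℝ E]

theorem sq_norm_sq_mul_inner_sub_le (a u y : E) :
    (‖a‖ ^ 2 * ⟪u, y⟫ - ⟪a, u⟫ * ⟪a, y⟫) ^ 2 ≤
      (‖a‖ ^ 2 * ‖u‖ ^ 2 - ⟪a, u⟫ ^ 2) * (‖a‖ ^ 2 * ‖y‖ ^ 2 - ⟪a, y⟫ ^ 2) := by
  rcases eq_or_ne a 0 with rfl | ha
  · simp
  have hα : 0 < ‖a‖ ^ 2 := by positivity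
  -- Cauchy–Schwarz for the components of `u` and `y` orthogonal to `a`, scaled by `‖a‖ ^ 2`
  have key := real_inner_mul_inner_self_le (‖a‖ ^ 2 • u - ⟪a, u⟫ • a) (‖a‖ ^ 2 • y - ⟪a, y⟫ • a)
  simp only [inner_sub_left, inner_sub_right, real_inner_smul_left, real_inner_smul_right,
    real_inner_comm a] at key
  simp only [real_inner_self_eq_norm_sq] at key
  refine le_of_mul_le_mul_left ?_ (pow_pos hα 2)
  linear_combination key

theorem sq_inner_le_of_cordes {δ : ℝ} (hδ0 : 0 < δ) (hδ1 : δ < 1) {a u : E} (ha : a ≠ 0)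
    (h : (‖u‖ ^ 2 - 1 + δ) * ‖a‖ ^ 2 ≤ ⟪a, u⟫ ^ 2) (y : E) :
    ⟪u, y⟫ ^ 2 ≤ (1 - δ / 2) * ‖y‖ ^ 2 + ‖u‖ ^ 2 * (2 - δ) / δ / ‖a‖ ^ 2 * ⟪a, y⟫ ^ 2 := by
  have hα : 0 < ‖a‖ ^ 2 := by positivity
  have hau : ⟪a, u⟫ ^ 2 ≤ ‖a‖ ^ 2 * ‖u‖ ^ 2 := by
    simpa only [sq, real_inner_self_eq_norm_sq] using real_inner_mul_inner_self_le a u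
  have hay : ⟪a, y⟫ ^ 2 ≤ ‖a‖ ^ 2 * ‖y‖ ^ 2 := by
    simpa only [sq, real_inner_self_eq_norm_sq] using real_inner_mul_inner_self_le a y
  set x := ‖a‖ ^ 2 * ⟪u, y⟫ - ⟪a, u⟫ * ⟪a, y⟫
  set z := ⟪a, u⟫ * ⟪a, y⟫
  have hx : x ^ 2 ≤ (1 - δ) * ‖a‖ ^ 2 * (‖a‖ ^ 2 * ‖y‖ ^ 2) :=
    (sq_norm_sq_mul_inner_sub_le a u y).trans <|
      mul_le_mul (by linarith) (by linarith [sq_nonneg ⟪a, y⟫]) (by linarith)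
        (by nlinarith)
  have hz : z ^ 2 ≤ ‖a‖ ^ 2 * ‖u‖ ^ 2 * ⟪a, y⟫ ^ 2 := by
    rw [mul_pow]; exact mul_le_mul_of_nonneg_right hau (sq_nonneg _)
  -- Young's inequality `(x + z)² ≤ (1 + ε) x² + (1 + 1/ε) z²` with `ε = δ / (2 (1 - δ))`
  have young : 2 * (1 - δ) * δ * (x + z) ^ 2 ≤ (2 - δ) * (δ * x ^ 2 + 2 * (1 - δ) * z ^ 2) := by
    nlinarith [sq_nonneg (δ * x - 2 * (1 - δ) * z)]
  refine le_of_mul_le_mul_left ?_ (by positivity : 0 < 2 * (1 - δ) * δ * (‖a‖ ^ 2) ^ 2)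
  calc 2 * (1 - δ) * δ * (‖a‖ ^ 2) ^ 2 * ⟪u, y⟫ ^ 2 = 2 * (1 - δ) * δ * (x + z) ^ 2 := by ring
    _ ≤ (2 - δ) * (δ * x ^ 2 + 2 * (1 - δ) * z ^ 2) := young
    _ ≤ (2 - δ) * (δ * ((1 - δ) * ‖a‖ ^ 2 * (‖a‖ ^ 2 * ‖y‖ ^ 2))
          + 2 * (1 - δ) * (‖a‖ ^ 2 * ‖u‖ ^ 2 * ⟪a, y⟫ ^ 2)) := by
      have : 0 ≤ 1 - δ := by linarith
      have : 0 ≤ 2 - δ := by linarith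
      gcongr
    _ = 2 * (1 - δ) * δ * (‖a‖ ^ 2) ^ 2 *
          ((1 - δ / 2) * ‖y‖ ^ 2 + ‖u‖ ^ 2 * (2 - δ) / δ / ‖a‖ ^ 2 * ⟪a, y⟫ ^ 2) := by
      field_simp

end InnerProductSpace

namespace Matrix

section Frobenius

variable {m n : Type*} [Fintype m] [Fintype n]

theorem inner_toLp_vec (S T : Matrix m n ℝ) :
    ⟪WithLp.toLp 2 (vec S), WithLp.toLp 2 (vec T)⟫ = trace (Sᵀ * T) := by
  rw [EuclideanSpace.inner_eq_star_dotProduct, star_trivial, dotProduct_comm, vec_dotProduct_vec]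

theorem norm_toLp_vec_sq (S : Matrix m n ℝ) : ‖WithLp.toLp 2 (vec S)‖ ^ 2 = trace (Sᵀ * S) := by
  rw [← real_inner_self_eq_norm_sq, inner_toLp_vec]

theorem sum_mul_apply_eq_trace_mul_transpose (S T : Matrix m n ℝ) :
    ∑ i, ∑ j, S i j * T i j = trace (S * Tᵀ) := by
  simp [trace, mul_apply]

theorem sum_mul_transpose_apply_eq_trace (X : Matrix n n ℝ) :
    ∑ i, ∑ j, X i j * Xᵀ i j = trace (X * X) := by
  simp [trace, mul_apply]

theorem IsSymm.transpose_mul_mul {α : Type*} [CommSemiring α] {A : Matrix n n α} (hA : A.IsSymm)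
    (P : Matrix n n α) : (Pᵀ * A * P).IsSymm := by
  simp only [IsSymm, transpose_mul, transpose_transpose, hA.eq, Matrix.mul_assoc]

end Frobenius

variable {n : Type*} [Fintype n] [DecidableEq n]

theorem trace_conj_mul_self {R : Type*} [CommRing R] {P : Matrix n n R} (hP : IsUnit P)
    (X : Matrix n n R) : trace (P * X * P⁻¹ * (P * X * P⁻¹)) = trace (X * X) := by
  rw [← trace_conj hP (X * X)]
  simp only [Matrix.mul_assoc, nonsing_inv_mul_cancel_left _ _ ((isUnit_iff_isUnit_det P).mp hP)]

theorem trace_conj'_mul_self {R : Type*} [CommRing R] {P : Matrix n n R} (hP : IsUnit P)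
    (X : Matrix n n R) : trace (P⁻¹ * X * P * (P⁻¹ * X * P)) = trace (X * X) := by
  rw [← trace_conj' hP (X * X)]
  simp only [Matrix.mul_assoc, mul_nonsing_inv_cancel_left _ _ ((isUnit_iff_isUnit_det P).mp hP)]

open scoped MatrixOrder in
theorem PosDef.exists_isUnit_eq_transpose_mul_self {B : Matrix n n ℝ} (hB : B.PosDef) :
    ∃ Q : Matrix n n ℝ, IsUnit Q ∧ B = Qᵀ * Q := by
  obtain ⟨Q, rfl⟩ := CStarAlgebra.nonneg_iff_eq_star_mul_self.mp hB.posSemidef.nonneg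
  have hdet := (isUnit_iff_isUnit_det _).mp hB.isUnit
  rw [det_mul] at hdet
  refine ⟨Q, (isUnit_iff_isUnit_det Q).mpr (isUnit_of_mul_isUnit_right hdet), ?_⟩
  rw [star_eq_conjTranspose, conjTranspose_eq_transpose_of_trivial]

theorem sq_trace_le_of_cordes {δ : ℝ} (hδ0 : 0 < δ) (hδ1 : δ < 1) {A : Matrix n n ℝ}
    (hA : A.IsSymm) (hA0 : A ≠ 0)
    (h : ((Fintype.card n : ℝ) - 1 + δ) * trace (A * A) ≤ trace A ^ 2)
    {M : Matrix n n ℝ} (hM : M.IsSymm) :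
    trace M ^ 2 ≤ (1 - δ / 2) * trace (M * M)
      + Fintype.card n * (2 - δ) / δ / trace (A * A) * trace (A * M) ^ 2 := by
  have hvec : WithLp.toLp 2 (vec A) ≠ 0 := by
    simpa [vec_eq_zero_iff] using hA0
  have key := sq_inner_le_of_cordes hδ0 hδ1 hvec (u := WithLp.toLp 2 (vec 1))
    (by simpa only [inner_toLp_vec, norm_toLp_vec_sq, hA.eq, transpose_one, mul_one, trace_one]
      using h)
    (WithLp.toLp 2 (vec M))
  simpa only [inner_toLp_vec, norm_toLp_vec_sq, hA.eq, hM.eq, transpose_one, one_mul, mul_one,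
    trace_one] using key

theorem sq_trace_mul_le_of_cordes {δ : ℝ} (hδ0 : 0 < δ) (hδ1 : δ < 1) {B A : Matrix n n ℝ}
    (hB : B.PosDef) (hA : A.IsSymm) (hA0 : A ≠ 0)
    (h : ((Fintype.card n : ℝ) - 1 + δ) * trace (B⁻¹ * A * (B⁻¹ * A)) ≤ trace (B⁻¹ * A) ^ 2)
    {M : Matrix n n ℝ} (hM : M.IsSymm) :
    trace (B * M) ^ 2 ≤ (1 - δ / 2) * trace (B * M * (B * M))
      + Fintype.card n * (2 - δ) / δ / trace (B⁻¹ * A * (B⁻¹ * A)) * trace (A * M) ^ 2 := by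
  obtain ⟨Q, hQ, rfl⟩ := hB.exists_isUnit_eq_transpose_mul_self
  have hQdet : IsUnit Q.det := (isUnit_iff_isUnit_det Q).mp hQ
  have hQtdet : IsUnit Qᵀ.det := isUnit_det_transpose Q hQdet
  have hQt : IsUnit Qᵀ := (isUnit_iff_isUnit_det _).mpr hQtdet
  set Â := Q⁻¹ᵀ * A * Q⁻¹
  set Ŷ := Q * M * Qᵀ
  have hBA : (Qᵀ * Q)⁻¹ * A = Q⁻¹ * Â * Q := by
    simp only [Â, Matrix.mul_inv_rev, transpose_nonsing_inv, Matrix.mul_assoc,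
      nonsing_inv_mul _ hQdet, Matrix.mul_one]
  have hBM : Qᵀ * Q * M = Qᵀ * Ŷ * Qᵀ⁻¹ := by
    simp only [Ŷ, Matrix.mul_assoc, mul_nonsing_inv _ hQtdet, Matrix.mul_one]
  have hAM : trace (A * M) = trace (Â * Ŷ) := by
    have : Â * Ŷ = Qᵀ⁻¹ * (A * M) * Qᵀ := by
      simp only [Â, Ŷ, transpose_nonsing_inv, Matrix.mul_assoc,
        nonsing_inv_mul_cancel_left _ _ hQdet]
    rw [this, trace_conj' hQt]
  have hÂ0 : Â ≠ 0 := by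
    have hA_eq : Qᵀ * Â * Q = A := by
      simp only [Â, transpose_nonsing_inv, Matrix.mul_assoc, mul_nonsing_inv_cancel_left _ _ hQtdet,
        nonsing_inv_mul _ hQdet, Matrix.mul_one]
    rintro h
    rw [h, Matrix.mul_zero, Matrix.zero_mul] at hA_eq
    exact hA0 hA_eq.symm
  rw [hBA, trace_conj'_mul_self hQ, trace_conj' hQ] at h
  rw [hBA, trace_conj'_mul_self hQ, hBM, trace_conj_mul_self hQt, trace_conj hQt, hAM]
  exact sq_trace_le_of_cordes hδ0 hδ1 (by simpa [Â] using hA.transpose_mul_mul Q⁻¹) hÂ0 h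
    (by simpa [Ŷ] using hM.transpose_mul_mul Qᵀ)

end Matrix

/-- Cordes' matrix inequality with respect to a symmetric positive
definite matrix `B`. -/
theorem stmt_2 (n : ℕ) (hn : 2 ≤ n) (δ : ℝ) (hδ0 : 0 < δ) (hδ1 : δ < 1) :
    ∃ c C : ℝ, 0 < c ∧ 0 < C ∧
      ∀ B A M : Matrix (Fin n) (Fin n) ℝ,
        B.IsSymm → B.PosDef → A.IsSymm → A ≠ 0 →
        ((n : ℝ) - 1 + δ) * (∑ i, ∑ j, (B⁻¹ * A) i j * ((B⁻¹ * A)ᵀ) i j)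
          ≤ (Matrix.trace (B⁻¹ * A)) ^ 2 →
        M.IsSymm →
        c * (∑ i, ∑ j, (B * M) i j * ((B * M)ᵀ) i j) ≤
          (∑ i, ∑ j, (B * M) i j * ((B * M)ᵀ) i j) - (Matrix.trace (B * M)) ^ 2
            + (C / (∑ i, ∑ j, (B⁻¹ * A) i j * ((B⁻¹ * A)ᵀ) i j))
              * (∑ i, ∑ j, A i j * M i j) ^ 2 := by
  have hn0 : (0 : ℝ) < n := by exact_mod_cast (by omega : 0 < n)
  refine ⟨δ / 2, n * (2 - δ) / δ, by positivity, div_pos (mul_pos hn0 (by linarith)) hδ0, ?_⟩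
  intro B A M _ hB hA hA0 hcond hM
  rw [sum_mul_transpose_apply_eq_trace] at hcond ⊢
  rw [sum_mul_transpose_apply_eq_trace, sum_mul_apply_eq_trace_mul_transpose, hM.eq]
  have key := sq_trace_mul_le_of_cordes hδ0 hδ1 hB hA hA0 (by simpa using hcond) hM
  rw [Fintype.card_fin] at key
  linarith
end

section
/- Let B ∈ ℝ^{n×n} be a symmetric positive definite matrix with smallest eigenvalue λ_min and largest eigenvalue λ_max. Then for every symmetric matrix M ∈ ℝ^{n×n} one has |BM|² ≤ (λ_max/λ_min)²·⟨BM,(BM)ᵀ⟩. -/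
/-!
Diagonalize `B = U D Uᵀ` with `U` orthogonal and `D = diag(d)`, and put `A = Uᵀ M U`, again
symmetric. Both sides are invariant under conjugation by `U`, so
`|BM|² = ∑ᵢⱼ dᵢ² Aᵢⱼ²` and `⟨BM, (BM)ᵀ⟩ = tr(BMBM) = ∑ᵢⱼ dᵢ dⱼ Aᵢⱼ²`, and the claim follows termwise
from `dᵢ² ≤ (λ_max/λ_min)² dᵢ dⱼ`.
-/

open Matrix

theorem sq_le_div_sq_mul_mul {a b lmin lmax : ℝ} (hlmin : 0 < lmin) (ha : lmin ≤ a)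
    (ha' : a ≤ lmax) (hb : lmin ≤ b) :
    a ^ 2 ≤ (lmax / lmin) ^ 2 * (a * b) := by
  have hlmax : lmin ≤ lmax := ha.trans ha'
  have ha0 : 0 < a := hlmin.trans_le ha
  have h1 : a * lmin ≤ lmax * b := mul_le_mul ha' hb hlmin.le (hlmin.le.trans hlmax)
  have h2 : a * lmin ≤ lmax * a := by rw [mul_comm]; gcongr
  rw [div_pow, div_mul_eq_mul_div, le_div_iff₀ (by positivity)]
  calc a ^ 2 * lmin ^ 2 = (a * lmin) * (a * lmin) := by ring
    _ ≤ (lmax * b) * (lmax * a) := mul_le_mul h1 h2 (by positivity) (h1.trans' (by positivity))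
    _ = lmax ^ 2 * (a * b) := by ring

namespace Matrix

variable {ι : Type*} [Fintype ι]

theorem sum_sq_eq_trace_mul_transpose (X : Matrix ι ι ℝ) :
    ∑ i, ∑ j, X i j ^ 2 = trace (X * Xᵀ) := by
  simp [trace, mul_apply, sq]

theorem sum_mul_transpose_eq_trace_mul_self (X : Matrix ι ι ℝ) :
    ∑ i, ∑ j, X i j * Xᵀ i j = trace (X * X) := by
  simp only [trace, diag, mul_apply, transpose_apply]

variable [DecidableEq ι]

theorem trace_conj_mul_conj {U : Matrix ι ι ℝ} (hU : Uᵀ * U = 1) (E F : Matrix ι ι ℝ) :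
    trace (U * E * Uᵀ * (U * F * Uᵀ)) = trace (E * F) := by
  have h : U * E * Uᵀ * (U * F * Uᵀ) = U * (E * F) * Uᵀ := by
    simp only [Matrix.mul_assoc]
    rw [← Matrix.mul_assoc Uᵀ U, hU, Matrix.one_mul]
  rw [h, trace_mul_cycle, ← Matrix.mul_assoc, hU, Matrix.one_mul]

theorem trace_diagonal_mul_mul_transpose (d : ι → ℝ) (A : Matrix ι ι ℝ) :
    trace (diagonal d * A * (diagonal d * A)ᵀ) = ∑ i, ∑ j, d i ^ 2 * A i j ^ 2 := by
  rw [← sum_sq_eq_trace_mul_transpose]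
  simp only [diagonal_mul, mul_pow]

theorem trace_diagonal_mul_mul_self (d : ι → ℝ) {A : Matrix ι ι ℝ} (hA : A.IsSymm) :
    trace (diagonal d * A * (diagonal d * A)) = ∑ i, ∑ j, d i * d j * A i j ^ 2 := by
  rw [← sum_mul_transpose_eq_trace_mul_self]
  refine Finset.sum_congr rfl fun i _ => Finset.sum_congr rfl fun j _ => ?_
  simp only [transpose_apply, diagonal_mul, hA.apply i j]
  ring

theorem trace_mul_transpose_le_of_eq_conj_diagonal {U B M : Matrix ι ι ℝ} {d : ι → ℝ}
    {lmin lmax : ℝ} (hU : Uᵀ * U = 1) (hB : B = U * diagonal d * Uᵀ) (hM : M.IsSymm)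
    (hlmin : 0 < lmin) (hd_ge : ∀ i, lmin ≤ d i) (hd_le : ∀ i, d i ≤ lmax) :
    trace (B * M * (B * M)ᵀ) ≤ (lmax / lmin) ^ 2 * trace (B * M * (B * M)) := by
  set A := Uᵀ * M * U
  have hA : A.IsSymm := by
    simp only [A, IsSymm, transpose_mul, transpose_transpose, hM.eq, Matrix.mul_assoc]
  have hBM : B * M = U * (diagonal d * A) * Uᵀ := by
    simp only [hB, A, Matrix.mul_assoc, mul_eq_one_comm.mp hU, Matrix.mul_one]
  have hBMt : (B * M)ᵀ = U * (diagonal d * A)ᵀ * Uᵀ := by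
    simp only [hBM, transpose_mul, transpose_transpose, Matrix.mul_assoc]
  rw [hBMt, hBM, trace_conj_mul_conj hU, trace_conj_mul_conj hU,
    trace_diagonal_mul_mul_transpose, trace_diagonal_mul_mul_self d hA]
  calc ∑ i, ∑ j, d i ^ 2 * A i j ^ 2
      ≤ ∑ i, ∑ j, (lmax / lmin) ^ 2 * (d i * d j) * A i j ^ 2 := by
        gcongr with i _ j _
        exact sq_le_div_sq_mul_mul hlmin (hd_ge i) (hd_le i) (hd_ge j)
    _ = (lmax / lmin) ^ 2 * ∑ i, ∑ j, d i * d j * A i j ^ 2 := by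
        simp only [Finset.mul_sum, mul_assoc]

theorem PosDef.trace_mul_transpose_le {B M : Matrix ι ι ℝ} (hB : B.PosDef) (hM : M.IsSymm)
    {lmin lmax : ℝ} (hlmin : 0 < lmin) (hge : ∀ i, lmin ≤ hB.isHermitian.eigenvalues i)
    (hle : ∀ i, hB.isHermitian.eigenvalues i ≤ lmax) :
    trace (B * M * (B * M)ᵀ) ≤ (lmax / lmin) ^ 2 * trace (B * M * (B * M)) := by
  set U : Matrix ι ι ℝ := (hB.isHermitian.eigenvectorUnitary : Matrix ι ι ℝ)
  have hU : Uᵀ * U = 1 := by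
    simpa only [star_eq_conjTranspose, conjTranspose_eq_transpose_of_trivial] using
      Unitary.coe_star_mul_self hB.isHermitian.eigenvectorUnitary
  have hBU : B = U * diagonal hB.isHermitian.eigenvalues * Uᵀ := by
    conv_lhs => rw [hB.isHermitian.spectral_theorem]
    simp only [RCLike.ofReal_real_eq_id, CompTriple.comp_eq, Unitary.conjStarAlgAut_apply,
      star_eq_conjTranspose, conjTranspose_eq_transpose_of_trivial, U]
  exact trace_mul_transpose_le_of_eq_conj_diagonal hU hBU hM hlmin hge hle

end Matrix

theorem stmt_3_general (n : ℕ) (B : Matrix (Fin n) (Fin n) ℝ)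
    (hB : B.PosDef) (lmin lmax : ℝ)
    (hmin : IsLeast (Set.range hB.isHermitian.eigenvalues) lmin)
    (hmax : IsGreatest (Set.range hB.isHermitian.eigenvalues) lmax) :
    ∀ M : Matrix (Fin n) (Fin n) ℝ, M.IsSymm →
      (∑ i, ∑ j, (B * M) i j ^ 2) ≤
        (lmax / lmin) ^ 2 * (∑ i, ∑ j, (B * M) i j * ((B * M)ᵀ) i j) := by
  intro M hM
  obtain ⟨i, rfl⟩ := hmin.1
  rw [sum_sq_eq_trace_mul_transpose, sum_mul_transpose_eq_trace_mul_self]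
  exact hB.trace_mul_transpose_le hM (hB.eigenvalues_pos i) (fun j => hmin.2 ⟨j, rfl⟩)
    fun j => hmax.2 ⟨j, rfl⟩

/-- For a symmetric positive definite `B` with smallest eigenvalue
`λ_min` and largest eigenvalue `λ_max`, `|BM|² ≤ (λ_max/λ_min)²·⟨BM,(BM)ᵀ⟩` for
every symmetric `M`. -/
theorem stmt_3 (n : ℕ) (hn : 1 ≤ n) (B : Matrix (Fin n) (Fin n) ℝ)
    (hBs : B.IsSymm) (hB : B.PosDef) (lmin lmax : ℝ)
    (hmin : IsLeast (Set.range hB.isHermitian.eigenvalues) lmin)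
    (hmax : IsGreatest (Set.range hB.isHermitian.eigenvalues) lmax) :
    ∀ M : Matrix (Fin n) (Fin n) ℝ, M.IsSymm →
      (∑ i, ∑ j, (B * M) i j ^ 2) ≤
        (lmax / lmin) ^ 2 * (∑ i, ∑ j, (B * M) i j * ((B * M)ᵀ) i j) :=
  stmt_3_general n B hB lmin lmax hmin hmax
end

section
/- Let B ∈ ℝ^{n×n} be a symmetric positive definite matrix with smallest eigenvalue λ_min. Then for every symmetric matrix M ∈ ℝ^{n×n} one has ⟨BM,(BM)ᵀ⟩ ≥ λ_min²·|M|². -/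
open Matrix

/-- For a symmetric positive definite `B` with smallest eigenvalue
`λ_min`, `⟨BM,(BM)ᵀ⟩ ≥ λ_min²·|M|²` for every symmetric `M`. -/
theorem stmt_4 (n : ℕ) (hn : 1 ≤ n) (B : Matrix (Fin n) (Fin n) ℝ)
    (hBs : B.IsSymm) (hB : B.PosDef) (lmin : ℝ)
    (hmin : IsLeast (Set.range hB.isHermitian.eigenvalues) lmin) :
    ∀ M : Matrix (Fin n) (Fin n) ℝ, M.IsSymm →
      (∑ i, ∑ j, (B * M) i j * ((B * M)ᵀ) i j) ≥ lmin ^ 2 * (∑ i, ∑ j, M i j ^ 2) := by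
  intro M hM
  set U : Matrix (Fin n) (Fin n) ℝ := (hB.isHermitian.eigenvectorUnitary : Matrix (Fin n) (Fin n) ℝ) with hUdef
  set d : Fin n → ℝ := hB.isHermitian.eigenvalues with hddef
  have hc : U * star U = 1 := hB.isHermitian.eigenvectorUnitary.2.2
  have hc' : star U * U = 1 := hB.isHermitian.eigenvectorUnitary.2.1
  have hstar : star U = Uᵀ := by
    ext i j; simp [Matrix.star_apply]
  -- positivity of eigenvalues and lmin
  have hlpos : 0 < lmin := by
    obtain ⟨i, hi⟩ := hmin.1
    rw [← hi]; exact hB.eigenvalues_pos i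
  have hle : ∀ i, lmin ≤ d i := fun i => hmin.2 ⟨i, rfl⟩
  -- spectral theorem
  have hD : Matrix.diagonal ((RCLike.ofReal : ℝ → ℝ) ∘ d) = Matrix.diagonal d := by
    norm_num
  have hBspec : B = U * Matrix.diagonal d * star U := by
    rw [← hD]; exact hB.isHermitian.spectral_theorem
  set N : Matrix (Fin n) (Fin n) ℝ := star U * M * U with hNdef
  have cancel : ∀ X Y : Matrix (Fin n) (Fin n) ℝ,
      (U * X * star U) * (U * Y * star U) = U * (X * Y) * star U := by
    intro X Y
    calc (U * X * star U) * (U * Y * star U)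
        = U * X * (star U * U) * Y * star U := by simp only [Matrix.mul_assoc]
      _ = U * (X * Y) * star U := by rw [hc']; simp only [Matrix.mul_one, Matrix.mul_assoc]
  have cancel' : ∀ X Y : Matrix (Fin n) (Fin n) ℝ,
      (star U * X * U) * (star U * Y * U) = star U * (X * Y) * U := by
    intro X Y
    calc (star U * X * U) * (star U * Y * U)
        = star U * X * (U * star U) * Y * U := by simp only [Matrix.mul_assoc]
      _ = star U * (X * Y) * U := by rw [hc]; simp only [Matrix.mul_one, Matrix.mul_assoc]
  have trace_conj : ∀ Z : Matrix (Fin n) (Fin n) ℝ, Matrix.trace (U * Z * star U) = Matrix.trace Z := by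
    intro Z
    rw [Matrix.trace_mul_cycle, hc', Matrix.one_mul]
  have trace_conj' : ∀ Z : Matrix (Fin n) (Fin n) ℝ, Matrix.trace (star U * Z * U) = Matrix.trace Z := by
    intro Z
    rw [Matrix.trace_mul_cycle, hc, Matrix.one_mul]
  have hBM : B * M = U * (Matrix.diagonal d * N) * star U := by
    rw [hBspec, hNdef]
    calc U * Matrix.diagonal d * star U * M
        = U * Matrix.diagonal d * star U * M * (U * star U) := by rw [hc, Matrix.mul_one]
      _ = U * (Matrix.diagonal d * (star U * M * U)) * star U := by
          simp only [Matrix.mul_assoc]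
  -- symmetry of N
  have hNt : Nᵀ = N := by
    rw [hNdef]
    calc (star U * M * U)ᵀ = Uᵀ * ((star U * M)ᵀ) := Matrix.transpose_mul _ _
      _ = Uᵀ * (Mᵀ * (star U)ᵀ) := by rw [Matrix.transpose_mul]
      _ = star U * M * U := by rw [hstar, Matrix.transpose_transpose, hM.eq, Matrix.mul_assoc]
  have hsymm : ∀ a b, N a b = N b a := fun a b => congrFun (congrFun hNt b) a
  have hNtr : Nᵀ = star U * Mᵀ * U := by
    rw [hNdef]
    calc (star U * M * U)ᵀ = Uᵀ * ((star U * M)ᵀ) := Matrix.transpose_mul _ _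
      _ = Uᵀ * (Mᵀ * (star U)ᵀ) := by rw [Matrix.transpose_mul]
      _ = star U * Mᵀ * U := by rw [hstar, Matrix.transpose_transpose, Matrix.mul_assoc]
  -- LHS as a double sum over N
  have hLHS : (∑ i, ∑ j, (B * M) i j * ((B * M)ᵀ) i j)
      = ∑ i, ∑ j, d i * d j * N i j ^ 2 := by
    have h1 : (∑ i, ∑ j, (B * M) i j * ((B * M)ᵀ) i j)
        = Matrix.trace (B * M * (B * M)) := by
      simp only [Matrix.trace, Matrix.diag, Matrix.mul_apply, Matrix.transpose_apply]
    rw [h1, hBM, cancel, trace_conj]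
    simp only [Matrix.trace, Matrix.diag, Matrix.mul_apply, Matrix.diagonal_apply,
      ite_mul, zero_mul, Finset.sum_ite_eq, Finset.mem_univ, if_true]
    rw [Finset.sum_comm]
    apply Finset.sum_congr rfl; intro i _
    apply Finset.sum_congr rfl; intro j _
    rw [hsymm j i]; ring
  -- RHS Frobenius norm invariance
  have hRHS : (∑ i, ∑ j, M i j ^ 2) = ∑ i, ∑ j, N i j ^ 2 := by
    have frob : ∀ A : Matrix (Fin n) (Fin n) ℝ,
        (∑ i, ∑ j, A i j ^ 2) = Matrix.trace (A * Aᵀ) := by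
      intro A
      simp only [Matrix.trace, Matrix.diag, Matrix.mul_apply, Matrix.transpose_apply, sq]
    rw [frob M, frob N]
    have hNt2 : N * Nᵀ = star U * (M * Mᵀ) * U := by
      rw [hNtr]
      show (star U * M * U) * (star U * Mᵀ * U) = _
      exact cancel' M Mᵀ
    rw [hNt2, trace_conj']
  rw [ge_iff_le, hLHS, hRHS, Finset.mul_sum]
  apply Finset.sum_le_sum
  intro i _
  rw [Finset.mul_sum]
  apply Finset.sum_le_sum
  intro j _
  have hdl : lmin ^ 2 ≤ d i * d j := by
    rw [sq]
    exact mul_le_mul (hle i) (hle j) hlpos.le ((hlpos.trans_le (hle i)).le)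
  nlinarith [sq_nonneg (N i j)]
end

section
/- Let n ≥ 2 be an integer and let −1 < i_b ≤ s_b < ∞ and 0 < i ≤ s be real numbers with (n−2)·s < 2(n−1). Then there exist constants c = c(n,i,s,i_b,s_b) > 0 and C = C(n,i,s) > 0 such that the following holds: for every unit vector w ∈ ℝⁿ, every α > −1, every β ∈ [i_b, s_b], such that i ≤ (1+α)/(1+β) ≤ s, and every symmetric matrix H ∈ ℝ^{n×n}, setting A = I + α·w wᵀ and B = I + β·w wᵀ, one has c·|BH|² ≤ ⟨BH,(BH)ᵀ⟩ − (tr(BH))² + C·⟨A,H⟩². -/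
/-!
Write `W = w wᵀ`, `q = ⟨W, H⟩`, `P = |H w|²`, `S = |H|²`, `t = tr H`. Since `W` is a symmetric
idempotent, every quantity in the inequality is a polynomial in `α, β, t, q, P, S`. Two
Cauchy–Schwarz inequalities for the Frobenius inner product constrain these numbers: `q² ≤ P`,
and, applied to `(I - W) H (I - W)` and `I - W` (of squared norm `n - 1`),
`(t - q)² ≤ (n - 1)(S - 2P + q²)`. What is left is a scalar inequality: after subtracting
nonnegative multiples of `P - q²` and of `S - 2P + q² - (t - q)²/(n - 1)`, it reduces to the
positive definiteness, uniformly in `θ = (1 + α)/(1 + β) ∈ [iθ, sθ]`, of a binary quadratic form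
in `u = (1 + β) q` and `v = t - q`; its determinant is `C θ (2 - m θ) - 1` with
`m = (n - 2)/(n - 1)`, which is where the hypothesis `(n - 2) sθ < 2 (n - 1)` enters.
-/

open Matrix

theorem mul_add_sq_le_of_mul_add_le_mul_sub_sq {a b c d : ℝ} (ha : 0 < a) (hd : 0 ≤ d)
    (hc : 0 ≤ c) (h : c * (a + d) ≤ a * d - b ^ 2) (u v : ℝ) :
    c * (u ^ 2 + v ^ 2) ≤ a * u ^ 2 + 2 * b * u * v + d * v ^ 2 := by
  have hca : c < a := by nlinarith
  have hcd : c ≤ d := by nlinarith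
  have hdet : b ^ 2 ≤ (a - c) * (d - c) := by nlinarith
  have key : 0 ≤ (a - c) * ((a - c) * u ^ 2 + 2 * b * u * v + (d - c) * v ^ 2) := by
    nlinarith [sq_nonneg ((a - c) * u + b * v), sq_nonneg v]
  nlinarith [nonneg_of_mul_nonneg_right key (sub_pos.2 hca)]

theorem exists_forall_mul_add_sq_le {m iθ sθ : ℝ} (hm : 0 ≤ m) (hiθ : 0 < iθ)
    (hmsθ : m * sθ < 2) :
    ∃ c C : ℝ, 0 < c ∧ 0 < C ∧ ∀ θ ∈ Set.Icc iθ sθ, ∀ u v : ℝ,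
      c * (u ^ 2 + v ^ 2) ≤ C * (v + θ * u) ^ 2 - 2 * u * v - m * v ^ 2 := by
  -- `C` makes the determinant at least `1`, and `c` is at most `1 / trace`.
  set κ := iθ * (2 - m * sθ)
  have hκ : 0 < κ := mul_pos hiθ (by linarith)
  set C := 2 / κ + m
  have hC : 0 < C := by positivity
  refine ⟨1 / (C * (sθ ^ 2 + 1)), C, by positivity, hC, fun θ ⟨hθi, hθs⟩ u v => ?_⟩
  have hθ : 0 < θ := hiθ.trans_le hθi
  have hκθ : κ ≤ θ * (2 - m * θ) :=
    mul_le_mul hθi (by nlinarith) (by linarith) hθ.le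
  have hdet : 1 ≤ C * θ ^ 2 * (2 / κ) - (C * θ - 1) ^ 2 := by
    have : 2 ≤ 2 / κ * (θ * (2 - m * θ)) := by
      rw [div_mul_eq_mul_div, le_div_iff₀ hκ]; linarith
    nlinarith
  have htr : C * θ ^ 2 + 2 / κ ≤ C * (sθ ^ 2 + 1) := by
    nlinarith [mul_le_mul hθs hθs hθ.le (hθ.le.trans hθs)]
  have hc : 1 / (C * (sθ ^ 2 + 1)) * (C * θ ^ 2 + 2 / κ) ≤ 1 := by
    rw [one_div_mul_eq_div, div_le_one (by positivity)]; exact htr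
  calc 1 / (C * (sθ ^ 2 + 1)) * (u ^ 2 + v ^ 2)
      ≤ C * θ ^ 2 * u ^ 2 + 2 * (C * θ - 1) * u * v + 2 / κ * v ^ 2 :=
        mul_add_sq_le_of_mul_add_le_mul_sub_sq (by positivity) (by positivity) (by positivity)
          (by linarith) u v
    _ = C * (v + θ * u) ^ 2 - 2 * u * v - m * v ^ 2 := by ring

theorem exists_cordes_scalar {N ib sb iθ sθ : ℝ} (hN : 1 ≤ N) (hib : -1 < ib) (hiθ : 0 < iθ)
    (hs : (N - 1) * sθ < 2 * N) :
    ∃ c C : ℝ, 0 < c ∧ 0 < C ∧ ∀ α β t q P S : ℝ, β ∈ Set.Icc ib sb →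
      (1 + α) / (1 + β) ∈ Set.Icc iθ sθ → q ^ 2 ≤ P → (t - q) ^ 2 ≤ N * (S - 2 * P + q ^ 2) →
      c * (S + (2 * β + β ^ 2) * P) ≤
        S + 2 * β * P + β ^ 2 * q ^ 2 - (t + β * q) ^ 2 + C * (t + α * q) ^ 2 := by
  have hN0 : 0 < N := by linarith
  have hNinv : N⁻¹ ≤ 1 := inv_le_one_of_one_le₀ hN
  have hmsθ : (1 - N⁻¹) * sθ < 2 := by
    rw [show (1 - N⁻¹) * sθ = (N - 1) * sθ / N by field_simp, div_lt_iff₀ hN0]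
    linarith
  obtain ⟨c₀, C, hc₀, hC, hform⟩ :=
    exists_forall_mul_add_sq_le (m := 1 - N⁻¹) (by linarith) hiθ hmsθ
  set cβ := 2 * (1 + ib) / (1 + (1 + sb) ^ 2)
  have hcβ : 0 < cβ := div_pos (by linarith) (by positivity)
  refine ⟨min c₀ (min 1 cβ), C, lt_min hc₀ (lt_min one_pos hcβ), hC,
    fun α β t q P S ⟨hβi, hβs⟩ hθ hqP hCS => ?_⟩
  set c := min c₀ (min 1 cβ)
  have hcc₀ : c ≤ c₀ := min_le_left _ _
  have hc1 : c ≤ 1 := (min_le_right _ _).trans (min_le_left _ _)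
  have hccβ : c ≤ cβ := (min_le_right _ _).trans (min_le_right _ _)
  have hρ : 0 < 1 + β := by linarith
  have hθρ : (1 + α) / (1 + β) * (1 + β) = 1 + α := div_mul_cancel₀ _ hρ.ne'
  have hD : 0 ≤ (2 * (1 + β) - c * (1 + (1 + β) ^ 2)) * (P - q ^ 2) := by
    refine mul_nonneg (sub_nonneg.2 ?_) (sub_nonneg.2 hqP)
    calc c * (1 + (1 + β) ^ 2) ≤ cβ * (1 + (1 + sb) ^ 2) := by gcongr
      _ = 2 * (1 + ib) := div_mul_cancel₀ _ (by positivity)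
      _ ≤ 2 * (1 + β) := by linarith
  have hR : 0 ≤ (1 - c) * ((S - 2 * P + q ^ 2) - N⁻¹ * (t - q) ^ 2) := by
    refine mul_nonneg (sub_nonneg.2 hc1) (sub_nonneg.2 ?_)
    rw [inv_mul_le_iff₀ hN0]; exact hCS
  have hG : c * (((1 + β) * q) ^ 2 + N⁻¹ * (t - q) ^ 2) ≤
      C * (t + α * q) ^ 2 - 2 * ((1 + β) * q) * (t - q) - (1 - N⁻¹) * (t - q) ^ 2 := by
    have h := hform _ hθ ((1 + β) * q) (t - q)
    rw [← mul_assoc, hθρ, show t - q + (1 + α) * q = t + α * q by ring] at h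
    refine le_trans (mul_le_mul hcc₀ ?_ (by positivity) hc₀.le) h
    gcongr
    exact mul_le_of_le_one_left (sq_nonneg _) hNinv
  linear_combination hD + hR + hG

namespace Matrix

variable {ι R : Type*} [Fintype ι]

theorem sum_sum_mul_eq_trace_mul_transpose [CommSemiring R] {κ : Type*} [Fintype κ]
    (A B : Matrix ι κ R) : ∑ k, ∑ l, A k l * B k l = trace (A * Bᵀ) :=
  sum_hadamard_eq A B

section RankOne

variable [CommRing R]

theorem vecMulVec_mul_mul_vecMulVec (w : ι → R) (X : Matrix ι ι R) :
    vecMulVec w w * X * vecMulVec w w = trace (vecMulVec w w * X) • vecMulVec w w := by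
  rw [vecMulVec_mul, vecMulVec_mul_vecMulVec, trace_vecMulVec, vecMulVec_smul, dotProduct_comm]

theorem isIdempotentElem_vecMulVec {w : ι → R} (hw : w ⬝ᵥ w = 1) :
    IsIdempotentElem (vecMulVec w w) := by
  rw [IsIdempotentElem, vecMulVec_mul_vecMulVec, hw, one_smul]

variable [DecidableEq ι]

theorem trace_one_add_smul_mul (W X : Matrix ι ι R) (γ : R) :
    trace ((1 + γ • W) * X) = trace X + γ * trace (W * X) := by
  rw [Matrix.add_mul, Matrix.one_mul, Matrix.smul_mul, trace_add, trace_smul, smul_eq_mul]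

theorem trace_one_add_smul_mul_mul_transpose {W : Matrix ι ι R} (hW : IsIdempotentElem W)
    (hWs : W.IsSymm) (β : R) {H : Matrix ι ι R} (hH : H.IsSymm) :
    trace ((1 + β • W) * H * ((1 + β • W) * H)ᵀ) =
      trace (H * H) + (2 * β + β ^ 2) * trace (W * H * H) := by
  have hHHW : trace (H * (H * W)) = trace (W * (H * H)) := by
    rw [← Matrix.mul_assoc, trace_mul_comm]
  have hWHHW : trace (W * (H * (H * W))) = trace (W * (H * H)) := by
    rw [trace_mul_comm, Matrix.mul_assoc, Matrix.mul_assoc, hW.eq, hHHW]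
  simp only [transpose_mul, transpose_add, transpose_smul, hWs.eq, hH.eq, Matrix.mul_assoc,
    Matrix.add_mul, Matrix.mul_add, Matrix.one_mul, Matrix.smul_mul, Matrix.mul_smul, trace_add,
    trace_smul, smul_eq_mul, hHHW, hWHHW]
  ring

theorem trace_one_add_smul_vecMulVec_mul_mul_self (w : ι → R) (β : R) (H : Matrix ι ι R) :
    trace ((1 + β • vecMulVec w w) * H * ((1 + β • vecMulVec w w) * H)) =
      trace (H * H) + 2 * β * trace (vecMulVec w w * H * H) +
        β ^ 2 * trace (vecMulVec w w * H) ^ 2 := by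
  have hHWH : trace (H * (vecMulVec w w * H)) = trace (vecMulVec w w * (H * H)) := by
    rw [trace_mul_comm, Matrix.mul_assoc]
  have hWHWH : trace (vecMulVec w w * (H * (vecMulVec w w * H))) =
      trace (vecMulVec w w * H) ^ 2 := by
    rw [← Matrix.mul_assoc, ← Matrix.mul_assoc, vecMulVec_mul_mul_vecMulVec, smul_mul,
      trace_smul, smul_eq_mul, sq]
  simp only [Matrix.mul_assoc, Matrix.add_mul, Matrix.mul_add, Matrix.one_mul, Matrix.smul_mul,
    Matrix.mul_smul, trace_add, trace_smul, smul_eq_mul, hHWH, hWHWH]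
  ring

end RankOne

section CauchySchwarz

variable [CommRing R] [LinearOrder R] [IsStrictOrderedRing R]

theorem sq_trace_mul_transpose_le {κ : Type*} [Fintype κ] (A B : Matrix ι κ R) :
    trace (A * Bᵀ) ^ 2 ≤ trace (A * Aᵀ) * trace (B * Bᵀ) := by
  simp only [← sum_sum_mul_eq_trace_mul_transpose, ← sq, ← Fintype.sum_prod_type']
  exact Finset.sum_mul_sq_le_sq_mul_sq _ _ _

variable {G : Matrix ι ι R}

theorem sq_trace_mul_le_trace_mul_trace_mul_mul_transpose (hG : IsIdempotentElem G)
    (hGs : G.IsSymm) (H : Matrix ι ι R) :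
    trace (G * H) ^ 2 ≤ trace G * trace (G * H * Hᵀ) := by
  have hGG (X : Matrix ι ι R) : G * (G * X) = G * X := by rw [← Matrix.mul_assoc, hG.eq]
  have hcross : trace (G * (G * H)ᵀ) = trace (G * H) := by
    rw [transpose_mul, hGs.eq, trace_mul_cycle', hGG, ← trace_transpose, transpose_mul,
      transpose_transpose, hGs.eq, trace_mul_comm]
  have hnorm : trace (G * H * (G * H)ᵀ) = trace (G * H * Hᵀ) := by
    rw [transpose_mul, hGs.eq, trace_mul_cycle', Matrix.mul_assoc, hGG]
  simpa only [hcross, hnorm, hGs.eq, hG.eq] using sq_trace_mul_transpose_le G (G * H)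

theorem sq_trace_mul_le_trace_mul_trace_mul_mul_mul_transpose (hG : IsIdempotentElem G)
    (hGs : G.IsSymm) (H : Matrix ι ι R) :
    trace (G * H) ^ 2 ≤ trace G * trace (G * H * G * Hᵀ) := by
  have hGG (X : Matrix ι ι R) : G * (G * X) = G * X := by rw [← Matrix.mul_assoc, hG.eq]
  have hcross : trace (G * (G * H * G)ᵀ) = trace (G * H) := by
    rw [transpose_mul, transpose_mul, hGs.eq, hGG, trace_mul_cycle', hGG, ← trace_transpose,
      transpose_mul, transpose_transpose, hGs.eq, trace_mul_comm]
  have hnorm : trace (G * H * G * (G * H * G)ᵀ) = trace (G * H * G * Hᵀ) := by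
    have h : G * H * G * (G * H * G)ᵀ = G * H * G * Hᵀ * G := by
      simp only [transpose_mul, hGs.eq, Matrix.mul_assoc, hGG]
    rw [h, trace_mul_comm]
    simp only [← Matrix.mul_assoc, hG.eq]
  simpa only [hcross, hnorm, hGs.eq, hG.eq] using sq_trace_mul_transpose_le G (G * H * G)

variable {w : ι → R} (hw : w ⬝ᵥ w = 1) {H : Matrix ι ι R} (hH : H.IsSymm)
include hw hH

theorem sq_trace_vecMulVec_mul_le :
    trace (vecMulVec w w * H) ^ 2 ≤ trace (vecMulVec w w * H * H) := by
  simpa only [trace_vecMulVec, hw, one_mul, hH.eq] using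
    sq_trace_mul_le_trace_mul_trace_mul_mul_transpose (isIdempotentElem_vecMulVec hw)
      (transpose_vecMulVec w w) H

theorem sq_trace_sub_trace_vecMulVec_mul_le [DecidableEq ι] :
    (trace H - trace (vecMulVec w w * H)) ^ 2 ≤ (Fintype.card ι - 1) *
      (trace (H * H) - 2 * trace (vecMulVec w w * H * H) + trace (vecMulVec w w * H) ^ 2) := by
  have hG : (1 : Matrix ι ι R) - vecMulVec w w = 1 + (-1 : R) • vecMulVec w w := by
    rw [neg_one_smul, sub_eq_add_neg]
  have := sq_trace_mul_le_trace_mul_trace_mul_mul_mul_transpose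
    (isIdempotentElem_vecMulVec hw).one_sub (isSymm_one.sub (transpose_vecMulVec w w)) H
  rw [hH.eq, hG, Matrix.mul_assoc ((1 + (-1 : R) • vecMulVec w w) * H),
    trace_one_add_smul_vecMulVec_mul_mul_self, trace_one_add_smul_mul,
    ← hG, trace_sub, trace_one, trace_vecMulVec, hw] at this
  linear_combination this

end CauchySchwarz

end Matrix

theorem stmt_12_general (n : ℕ) (hn : 2 ≤ n) (ib sb iθ sθ : ℝ)
    (hib : -1 < ib)
    (hiθ : 0 < iθ)
    (hsθ : ((n : ℝ) - 2) * sθ < 2 * ((n : ℝ) - 1)) :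
    ∃ c C : ℝ, 0 < c ∧ 0 < C ∧
      ∀ (w : Fin n → ℝ), (∑ k, w k ^ 2) = 1 →
      ∀ α β : ℝ, -1 < α → β ∈ Set.Icc ib sb →
        iθ ≤ (1 + α) / (1 + β) → (1 + α) / (1 + β) ≤ sθ →
      ∀ H : Matrix (Fin n) (Fin n) ℝ, H.IsSymm →
        c * (∑ k, ∑ l,
              (((1 + β • Matrix.vecMulVec w w) * H) k l) ^ 2) ≤
          (∑ k, ∑ l, ((1 + β • Matrix.vecMulVec w w) * H) k l
              * (((1 + β • Matrix.vecMulVec w w) * H)ᵀ) k l)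
            - (Matrix.trace ((1 + β • Matrix.vecMulVec w w) * H)) ^ 2
            + C * (∑ k, ∑ l, (1 + α • Matrix.vecMulVec w w) k l * H k l) ^ 2 := by
  have hN : (1 : ℝ) ≤ n - 1 := by
    have : (2 : ℝ) ≤ n := by exact_mod_cast hn
    linarith
  obtain ⟨c, C, hc, hC, hscalar⟩ :=
    exists_cordes_scalar (sb := sb) hN hib hiθ (by linarith)
  refine ⟨c, C, hc, hC, fun w hw α β _ hβ hθi hθs H hH => ?_⟩
  have hw : w ⬝ᵥ w = 1 := by simpa only [dotProduct, sq] using hw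
  have hnorm : ∑ k, ∑ l, ((1 + β • vecMulVec w w) * H) k l ^ 2 =
      trace (H * H) + (2 * β + β ^ 2) * trace (vecMulVec w w * H * H) := by
    rw [← trace_one_add_smul_mul_mul_transpose (isIdempotentElem_vecMulVec hw)
      (transpose_vecMulVec w w) β hH, ← sum_sum_mul_eq_trace_mul_transpose]
    simp only [sq]
  rw [hnorm, sum_sum_mul_eq_trace_mul_transpose, sum_sum_mul_eq_trace_mul_transpose,
    transpose_transpose, hH.eq, trace_one_add_smul_vecMulVec_mul_mul_self,
    trace_one_add_smul_mul, trace_one_add_smul_mul]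
  have hCS := sq_trace_sub_trace_vecMulVec_mul_le hw hH
  rw [Fintype.card_fin] at hCS
  exact hscalar α β _ _ _ _ hβ ⟨hθi, hθs⟩ (sq_trace_vecMulVec_mul_le hw hH) hCS

/-- The key algebraic Cordes-type inequality for the matrices
`A = I + α·wwᵀ` and `B = I + β·wwᵀ`. -/
theorem stmt_12 (n : ℕ) (hn : 2 ≤ n) (ib sb iθ sθ : ℝ)
    (hib : -1 < ib) (hibsb : ib ≤ sb)
    (hiθ : 0 < iθ) (hθ : iθ ≤ sθ)
    (hsθ : ((n : ℝ) - 2) * sθ < 2 * ((n : ℝ) - 1)) :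
    ∃ c C : ℝ, 0 < c ∧ 0 < C ∧
      ∀ (w : Fin n → ℝ), (∑ k, w k ^ 2) = 1 →
      ∀ α β : ℝ, -1 < α → β ∈ Set.Icc ib sb →
        iθ ≤ (1 + α) / (1 + β) → (1 + α) / (1 + β) ≤ sθ →
      ∀ H : Matrix (Fin n) (Fin n) ℝ, H.IsSymm →
        c * (∑ k, ∑ l,
              (((1 + β • Matrix.vecMulVec w w) * H) k l) ^ 2) ≤
          (∑ k, ∑ l, ((1 + β • Matrix.vecMulVec w w) * H) k l
              * (((1 + β • Matrix.vecMulVec w w) * H)ᵀ) k l)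
            - (Matrix.trace ((1 + β • Matrix.vecMulVec w w) * H)) ^ 2
            + C * (∑ k, ∑ l, (1 + α • Matrix.vecMulVec w w) k l * H k l) ^ 2 :=
  stmt_12_general n hn ib sb iθ sθ hib hiθ hsθ
end

section
/- Let Ω ⊆ ℝⁿ with n ≥ 2 be an open set, let 0 < δ < 1, and let A: Ω → ℝ^{n×n} be a matrix-valued function such that at every point x ∈ Ω the matrix A(x) is symmetric, nonzero, and satisfies the Cordes condition (n−1+δ)·|A(x)|² ≤ (tr A(x))². Then there exist constants c = c(n,δ) > 0 and C = C(n,δ) > 0 such that for every u ∈ C³(Ω) the pointwise inequality c·|D²u|² ≤ div(D²u·Du − Δu·Du) + (C/|A|²)·⟨A,D²u⟩² holds everywhere in Ω. -/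
open Matrix

/-- The Jacobian matrix `DX` of a vector field `X : ℝⁿ → ℝⁿ`. -/
noncomputable def jac {n : ℕ} (X : (Fin n → ℝ) → (Fin n → ℝ)) (x : Fin n → ℝ) :
    Matrix (Fin n) (Fin n) ℝ :=
  Matrix.of fun i j => fderiv ℝ X x (Pi.single j 1) i

/-- The divergence `div X = tr(DX)` of a vector field. -/
noncomputable def divg {n : ℕ} (X : (Fin n → ℝ) → (Fin n → ℝ)) (x : Fin n → ℝ) : ℝ :=
  Matrix.trace (jac X x)

/-- The gradient `Du` of a scalar function. -/
noncomputable def grad {n : ℕ} (u : (Fin n → ℝ) → ℝ) (x : Fin n → ℝ) : Fin n → ℝ :=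
  fun i => fderiv ℝ u x (Pi.single i 1)

/-- The Hessian matrix `D²u` of a scalar function. -/
noncomputable def hess {n : ℕ} (u : (Fin n → ℝ) → ℝ) (x : Fin n → ℝ) :
    Matrix (Fin n) (Fin n) ℝ :=
  Matrix.of fun i j => fderiv ℝ (fun y => fderiv ℝ u y (Pi.single i 1)) x (Pi.single j 1)

/-- The Laplacian `Δu = tr(D²u)`. -/
noncomputable def lap {n : ℕ} (u : (Fin n → ℝ) → ℝ) (x : Fin n → ℝ) : ℝ :=
  Matrix.trace (hess u x)

/-!
Expanding the divergence with the symmetry of second and third derivatives gives the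
Miranda–Talenti identity `div(D²u Du − Δu Du) = |D²u|² − (Δu)²`, so the claim is a pointwise
inequality for the matrix `H = D²u`. Cauchy–Schwarz for `⟨|A|² I − (tr A) A, H⟩`, where
`||A|² I − (tr A) A|² = |A|² (n |A|² − (tr A)²) ≤ (1 − δ) |A|⁴` by the Cordes condition, bounds
`|A|² tr H − tr A ⟨A, H⟩`; Young's inequality with weight `ε = δ / (2 (1 − δ))` then gives
`(tr H)² ≤ (1 − δ/2) |H|² + n (2 − δ) / δ · ⟨A, H⟩² / |A|²`, i.e. the claim with `c = δ/2` and
`C = n (2 − δ) / δ`.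
-/

theorem add_sq_le_one_add_mul_sq_add_one_add_inv_mul_sq {ε : ℝ} (hε : 0 < ε) (a b : ℝ) :
    (a + b) ^ 2 ≤ (1 + ε) * a ^ 2 + (1 + ε⁻¹) * b ^ 2 := by
  have h : 0 ≤ (ε * a - b) ^ 2 / ε := by positivity
  have h' : (ε * a - b) ^ 2 / ε = (1 + ε) * a ^ 2 + (1 + ε⁻¹) * b ^ 2 - (a + b) ^ 2 := by
    field_simp
    ring
  linarith

theorem sq_le_of_sq_mul_sub_mul_le {n δ S T P H L : ℝ} (hδ0 : 0 < δ) (hδ1 : δ < 1) (hS : 0 < S)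
    (hX : (S * L - T * P) ^ 2 ≤ (1 - δ) * S ^ 2 * H) (hT : T ^ 2 ≤ n * S) :
    L ^ 2 ≤ (1 - δ / 2) * H + n * (2 - δ) / δ / S * P ^ 2 := by
  have hδ1' : 0 < 1 - δ := sub_pos.2 hδ1
  have hε : 0 < δ / (2 * (1 - δ)) := by positivity
  have hyoung := add_sq_le_one_add_mul_sq_add_one_add_inv_mul_sq hε (S * L - T * P) (T * P)
  have h1 : 1 + δ / (2 * (1 - δ)) = (1 - δ / 2) / (1 - δ) := by field_simp; ring
  have h2 : 1 + (δ / (2 * (1 - δ)))⁻¹ = (2 - δ) / δ := by field_simp; ring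
  rw [sub_add_cancel, h1, h2] at hyoung
  have hTP : (T * P) ^ 2 ≤ n * S * P ^ 2 := by rw [mul_pow]; gcongr
  have hSL : S ^ 2 * L ^ 2 ≤ S ^ 2 * ((1 - δ / 2) * H + n * (2 - δ) / δ / S * P ^ 2) :=
    calc S ^ 2 * L ^ 2 = (S * L) ^ 2 := by ring
      _ ≤ (1 - δ / 2) / (1 - δ) * ((1 - δ) * S ^ 2 * H) + (2 - δ) / δ * (n * S * P ^ 2) := by
        refine hyoung.trans ?_
        have : 0 ≤ 2 - δ := by linarith
        gcongr
        linarith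
      _ = S ^ 2 * ((1 - δ / 2) * H + n * (2 - δ) / δ / S * P ^ 2) := by field_simp
  exact le_of_mul_le_mul_left hSL (by positivity)

namespace Matrix

variable {m ι : Type*} [Fintype m] [Fintype ι]

def hsInner (M N : Matrix m ι ℝ) : ℝ := ∑ i, ∑ j, M i j * N i j

def hsNormSq (M : Matrix m ι ℝ) : ℝ := ∑ i, ∑ j, M i j ^ 2

theorem hsNormSq_nonneg (M : Matrix m ι ℝ) : 0 ≤ M.hsNormSq := by
  unfold hsNormSq; positivity

theorem hsNormSq_pos {M : Matrix m ι ℝ} (hM : M ≠ 0) : 0 < M.hsNormSq := by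
  refine (hsNormSq_nonneg M).lt_of_ne' fun h => hM ?_
  ext i j
  simp only [hsNormSq, ← Fintype.sum_prod_type'] at h
  have := (Fintype.sum_eq_zero_iff_of_nonneg fun p => sq_nonneg (M p.1 p.2)).1 h
  simpa using congrFun this (i, j)

theorem hsInner_sq_le (M N : Matrix m ι ℝ) : M.hsInner N ^ 2 ≤ M.hsNormSq * N.hsNormSq := by
  simp only [hsInner, hsNormSq, ← Fintype.sum_prod_type']
  exact Finset.sum_mul_sq_le_sq_mul_sq _ _ _

theorem trace_sq_le_card_mul_hsNormSq (M : Matrix ι ι ℝ) :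
    M.trace ^ 2 ≤ Fintype.card ι * M.hsNormSq :=
  calc M.trace ^ 2 ≤ Fintype.card ι * ∑ i, M i i ^ 2 := by
        simpa [trace] using sq_sum_le_card_mul_sum_sq (s := Finset.univ) (f := fun i => M i i)
    _ ≤ Fintype.card ι * M.hsNormSq := by
        gcongr
        exact Finset.sum_le_sum fun i _ => Finset.single_le_sum (f := fun j => M i j ^ 2)
          (fun j _ => sq_nonneg _) (Finset.mem_univ i)

variable [DecidableEq ι]

theorem hsInner_smul_one_sub_smul (a b : ℝ) (A H : Matrix ι ι ℝ) :
    (a • 1 - b • A).hsInner H = a * H.trace - b * A.hsInner H := by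
  simp [hsInner, sub_mul, Finset.sum_sub_distrib, one_apply, Finset.mul_sum, trace, mul_assoc]

theorem hsNormSq_smul_one_sub_smul (a b : ℝ) (A : Matrix ι ι ℝ) :
    (a • 1 - b • A).hsNormSq
      = Fintype.card ι * a ^ 2 - 2 * a * b * A.trace + b ^ 2 * A.hsNormSq := by
  have h : ∀ i j, (a • 1 - b • A) i j ^ 2
      = a ^ 2 * (1 : Matrix ι ι ℝ) i j - 2 * a * b * ((1 : Matrix ι ι ℝ) i j * A i j)
        + b ^ 2 * A i j ^ 2 := by
    intro i j
    by_cases hij : i = j <;> simp [one_apply, hij] <;> ring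
  simp only [hsNormSq, h, Finset.sum_add_distrib, Finset.sum_sub_distrib, ← Finset.mul_sum]
  simp [one_apply, trace, mul_comm]

theorem cordes_estimate {δ : ℝ} (hδ0 : 0 < δ) (hδ1 : δ < 1) {A : Matrix ι ι ℝ} (hA : A ≠ 0)
    (hCordes : ((Fintype.card ι : ℝ) - 1 + δ) * A.hsNormSq ≤ A.trace ^ 2) (H : Matrix ι ι ℝ) :
    δ / 2 * H.hsNormSq
      ≤ H.hsNormSq - H.trace ^ 2
        + Fintype.card ι * (2 - δ) / δ / A.hsNormSq * A.hsInner H ^ 2 := by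
  set n : ℝ := (Fintype.card ι : ℝ)
  set S := A.hsNormSq
  set T := A.trace
  have hS : 0 < S := hsNormSq_pos hA
  have hCS : (S * H.trace - T * A.hsInner H) ^ 2 ≤ (1 - δ) * S ^ 2 * H.hsNormSq :=
    calc (S * H.trace - T * A.hsInner H) ^ 2 = (S • 1 - T • A).hsInner H ^ 2 := by
          rw [hsInner_smul_one_sub_smul]
      _ ≤ (S • 1 - T • A).hsNormSq * H.hsNormSq := hsInner_sq_le _ _
      _ = S * (n * S - T ^ 2) * H.hsNormSq := by rw [hsNormSq_smul_one_sub_smul]; ring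
      _ ≤ S * ((1 - δ) * S) * H.hsNormSq := by
          have := H.hsNormSq_nonneg
          gcongr
          linarith
      _ = (1 - δ) * S ^ 2 * H.hsNormSq := by ring
  linarith [sq_le_of_sq_mul_sub_mul_le hδ0 hδ1 hS hCS (trace_sq_le_card_mul_hsNormSq A)]

end Matrix

section SecondDerivatives

variable {E F : Type*} [NormedAddCommGroup E] [NormedSpace ℝ E]
  [NormedAddCommGroup F] [NormedSpace ℝ F] {f : E → F} {x : E}

theorem fderiv_fderiv_apply_comm (hf : ContDiffAt ℝ 2 f x) (v w : E) :
    fderiv ℝ (fun y => fderiv ℝ f y v) x w = fderiv ℝ (fun y => fderiv ℝ f y w) x v := by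
  have hdf : DifferentiableAt ℝ (fderiv ℝ f) x :=
    (hf.fderiv_right (m := 1) le_rfl).differentiableAt one_ne_zero
  rw [fderiv_clm_apply hdf (differentiableAt_const v),
    fderiv_clm_apply hdf (differentiableAt_const w)]
  simpa using hf.isSymmSndFDerivAt (by simp) w v

end SecondDerivatives

section VectorCalculus

variable {n : ℕ} {u : (Fin n → ℝ) → ℝ} {x : Fin n → ℝ}

theorem divg_eq_sum_fderiv_apply {X : (Fin n → ℝ) → (Fin n → ℝ)}
    (hX : ∀ i, DifferentiableAt ℝ (fun y => X y i) x) :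
    divg X x = ∑ i, fderiv ℝ (fun y => X y i) x (Pi.single i 1) := by
  simp only [divg, jac, Matrix.trace, Matrix.diag, Matrix.of_apply]
  rw [fderiv_pi hX]
  rfl

theorem ContDiffAt.grad_apply {m : ℕ} (hu : ContDiffAt ℝ (m + 1) u x) (i : Fin n) :
    ContDiffAt ℝ m (fun y => grad u y i) x :=
  (hu.fderiv_right le_rfl).clm_apply contDiffAt_const

theorem ContDiffAt.hess_apply {m : ℕ} (hu : ContDiffAt ℝ (m + 2) u x) (i j : Fin n) :
    ContDiffAt ℝ m (fun y => hess u y i j) x :=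
  ((hu.grad_apply (m := m + 1) i).grad_apply j)

theorem hess_comm (hu : ContDiffAt ℝ 2 u x) (i j : Fin n) : hess u x i j = hess u x j i :=
  fderiv_fderiv_apply_comm hu _ _

theorem fderiv_hess_apply_comm (hu : ContDiffAt ℝ 3 u x) (i j k : Fin n) :
    fderiv ℝ (fun y => hess u y i j) x (Pi.single k 1)
      = fderiv ℝ (fun y => hess u y i k) x (Pi.single j 1) :=
  fderiv_fderiv_apply_comm (hu.grad_apply (m := 2) i) _ _

theorem ContDiffAt.differentiableAt_lap (hu : ContDiffAt ℝ 3 u x) :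
    DifferentiableAt ℝ (lap u) x := by
  change DifferentiableAt ℝ (fun y => ∑ k, hess u y k k) x
  exact DifferentiableAt.fun_sum fun k _ =>
    (hu.hess_apply (m := 1) k k).differentiableAt one_ne_zero

theorem fderiv_lap_apply (hu : ContDiffAt ℝ 3 u x) (v : Fin n → ℝ) :
    fderiv ℝ (lap u) x v = ∑ k, fderiv ℝ (fun y => hess u y k k) x v := by
  have hH k : DifferentiableAt ℝ (fun y => hess u y k k) x :=
    (hu.hess_apply (m := 1) k k).differentiableAt one_ne_zero
  rw [show lap u = fun y => ∑ k, hess u y k k from rfl, fderiv_fun_sum fun k _ => hH k,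
    _root_.sum_apply]

theorem divg_hess_mulVec_grad_sub_lap_smul_grad (hu : ContDiffAt ℝ 3 u x) :
    divg (fun y => hess u y *ᵥ grad u y - lap u y • grad u y) x
      = ∑ i, ∑ j, hess u x i j ^ 2 - lap u x ^ 2 := by
  have hg i : DifferentiableAt ℝ (fun y => grad u y i) x :=
    (hu.grad_apply (m := 2) i).differentiableAt two_ne_zero
  have hH i j : DifferentiableAt ℝ (fun y => hess u y i j) x :=
    (hu.hess_apply (m := 1) i j).differentiableAt one_ne_zero
  have hL := hu.differentiableAt_lap
  have hHg i : DifferentiableAt ℝ (fun y => ∑ j, hess u y i j * grad u y j) x :=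
    DifferentiableAt.fun_sum fun j _ => (hH i j).fun_mul (hg j)
  have hX i : DifferentiableAt ℝ
      (fun y => ∑ j, hess u y i j * grad u y j - lap u y * grad u y i) x :=
    (hHg i).sub (hL.fun_mul (hg i))
  have hdX i :
      fderiv ℝ (fun y => ∑ j, hess u y i j * grad u y j - lap u y * grad u y i) x (Pi.single i 1)
        = ∑ j, (hess u x i j * hess u x j i
            + grad u x j * fderiv ℝ (fun y => hess u y i j) x (Pi.single i 1))
          - (lap u x * hess u x i i + grad u x i * fderiv ℝ (lap u) x (Pi.single i 1)) := by
    rw [fderiv_fun_sub (hHg i) (hL.fun_mul (hg i)),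
      fderiv_fun_sum (A := fun j y => hess u y i j * grad u y j) fun j _ =>
        (hH i j).fun_mul (hg j),
      fderiv_fun_mul hL (hg i)]
    simp only [fderiv_fun_mul (hH _ _) (hg _), _root_.sub_apply, _root_.sum_apply,
      _root_.add_apply, _root_.smul_apply, smul_eq_mul]
    rfl
  have hthird i j : fderiv ℝ (fun y => hess u y i j) x (Pi.single i 1)
      = fderiv ℝ (fun y => hess u y i i) x (Pi.single j 1) := fderiv_hess_apply_comm hu i j i
  refine (divg_eq_sum_fderiv_apply hX).trans ?_
  simp only [hdX, hthird, fderiv_lap_apply hu, Finset.sum_sub_distrib, Finset.sum_add_distrib,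
    ← Finset.mul_sum]
  have hsq : ∑ i, ∑ j, hess u x i j * hess u x j i = ∑ i, ∑ j, hess u x i j ^ 2 := by
    refine Finset.sum_congr rfl fun i _ => Finset.sum_congr rfl fun j _ => ?_
    rw [hess_comm (hu.of_le (by norm_num)) j i, sq]
  have hgrad : ∑ i, ∑ j, grad u x j * fderiv ℝ (fun y => hess u y i i) x (Pi.single j 1)
      = ∑ j, grad u x j * ∑ k, fderiv ℝ (fun y => hess u y k k) x (Pi.single j 1) := by
    rw [Finset.sum_comm]
    simp only [Finset.mul_sum]
  rw [hsq, hgrad, show ∑ i, hess u x i i = lap u x from rfl]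
  ring

end VectorCalculus

/-- Talenti's inequality under the Cordes condition. -/
theorem stmt_15 (n : ℕ) (hn : 2 ≤ n) (Ω : Set (Fin n → ℝ)) (hΩ : IsOpen Ω)
    (δ : ℝ) (hδ0 : 0 < δ) (hδ1 : δ < 1)
    (A : (Fin n → ℝ) → Matrix (Fin n) (Fin n) ℝ)
    (hA : ∀ x ∈ Ω, (A x).IsSymm ∧ A x ≠ 0 ∧
      ((n : ℝ) - 1 + δ) * (∑ i, ∑ j, A x i j ^ 2) ≤ (Matrix.trace (A x)) ^ 2) :
    ∃ c C : ℝ, 0 < c ∧ 0 < C ∧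
      ∀ u : (Fin n → ℝ) → ℝ, ContDiffOn ℝ 3 u Ω →
        ∀ x ∈ Ω,
          c * (∑ i, ∑ j, hess u x i j ^ 2) ≤
            divg (fun y => (hess u y).mulVec (grad u y) - lap u y • grad u y) x
              + (C / (∑ i, ∑ j, A x i j ^ 2)) * (∑ i, ∑ j, A x i j * hess u x i j) ^ 2 := by
  have hn0 : (0 : ℝ) < n := by exact_mod_cast (by omega : 0 < n)
  refine ⟨δ / 2, n * (2 - δ) / δ, by positivity, div_pos (mul_pos hn0 (by linarith)) hδ0, ?_⟩
  intro u hu x hx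
  obtain ⟨-, hA0, hCordes⟩ := hA x hx
  rw [divg_hess_mulVec_grad_sub_lap_smul_grad (hu.contDiffAt (hΩ.mem_nhds hx))]
  have := Matrix.cordes_estimate hδ0 hδ1 hA0 (by rwa [Fintype.card_fin]) (hess u x)
  rwa [Fintype.card_fin] at this
end
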